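/- Let F be a field with char F = 2 and more than two elements, and let · be a bilinear multiplication on F × F that is not identically zero and is curled (for every x there exists λ ∈ F with x·x = λ • x). Then (F × F, ·) is isomorphic to exactly one of the following algebras, given by their matrices of structure constants: ((1, 1, 0, 0), (0, 1, 0, 1)); ((α1, 0, 0, 0), (0, 1, 1+α1, 0)) for some α1 ∈ F; or ((1, 0, 0, 0), (0, 0, 1, 0)). Here 'exactly one' means in addition that no two distinct algebras of this list (in particular for distinct values of α1) are isomorphic to each other. -/

import Mathlib

/-!
Over a field with more than two elements, a bilinear curled product on `F × F` has the form
`x · y = φ x • y + ψ y • x` for a unique pair of linear forms `(φ, ψ)`, and a linear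
equivalence `g` is an isomorphism onto the product of `(φ', ψ')` exactly when
`(φ, ψ) = (φ' ∘ g, ψ' ∘ g)`. Isomorphism classes of nonzero curled products are thus the
`GL₂`-orbits of nonzero pairs of forms. Each orbit contains `(fst, snd)`, `(fst, c • fst)` or
`(0, fst)`, and these are told apart by the linear relations `a • φ + b • ψ = 0` they satisfy:
only the trivial one, the line `a + c b = 0`, and the line `b = 0`. Characteristic 2 is needed
only to match these normal forms with the listed structure constants.
-/

/-- The bilinear multiplication on `F × F` determined by the matrix of structure
constants `((a1, a2, a3, a4), (b1, b2, b3, b4))`. -/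
def scMul {F : Type*} [Field F] (a1 a2 a3 a4 b1 b2 b3 b4 : F) (x y : F × F) : F × F :=
  (a1 * x.1 * y.1 + a2 * x.1 * y.2 + a3 * x.2 * y.1 + a4 * x.2 * y.2,
   b1 * x.1 * y.1 + b2 * x.1 * y.2 + b3 * x.2 * y.1 + b4 * x.2 * y.2)

/-- A multiplication `m` on `F × F` is endo-commutative if `(x·x)·(y·y) = (x·y)·(x·y)`. -/
def IsEndoCommutative {F : Type*} [Field F] (m : F × F → F × F → F × F) : Prop :=
  ∀ x y : F × F, m (m x x) (m y y) = m (m x y) (m x y)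

/-- A multiplication `m` on `F × F` is curled if every square `x·x` is a scalar
multiple of `x`. -/
def IsCurled {F : Type*} [Field F] (m : F × F → F × F → F × F) : Prop :=
  ∀ x : F × F, ∃ lam : F, m x x = lam • x

/-- `m` is bilinear (linear in each argument). -/
def IsBilinearMul {F : Type*} [Field F] (m : F × F → F × F → F × F) : Prop :=
  (∀ (a : F) (x x' y : F × F), m (a • x + x') y = a • m x y + m x' y) ∧
  (∀ (a : F) (x y y' : F × F), m x (a • y + y') = a • m x y + m x y')

/-- Two multiplications on `F × F` are isomorphic if some `F`-linear
equivalence `g` of `F × F` satisfies `g (x·y) = g x ∘ g y`. -/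
def AlgIso {F : Type*} [Field F] (m₁ m₂ : F × F → F × F → F × F) : Prop :=
  ∃ g : (F × F) ≃ₗ[F] F × F, ∀ x y, g (m₁ x y) = m₂ (g x) (g y)

/-- The list of curled algebras of Theorem 7 (char F = 2, F ≠ ℤ/2ℤ):
`Sum.inr true` is `A₁,₂(1,1,0,0)`, `Sum.inl a1` is `A₃,₂(a1, 0, 1)`, and
`Sum.inr false` is `A₆,₂(1, 0)`. -/
def curledFamily2 {F : Type*} [Field F] : F ⊕ Bool → (F × F → F × F → F × F)
  | Sum.inr true => scMul 1 1 0 0 0 1 0 1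
  | Sum.inl a1 => scMul a1 0 0 0 0 1 (1 + a1) 0
  | Sum.inr false => scMul 1 0 0 0 0 0 1 0

def curledMul {R V : Type*} [CommSemiring R] [AddCommMonoid V] [Module R V]
    (φ ψ : Module.Dual R V) (x y : V) : V :=
  φ x • y + ψ y • x

section

variable {R V W : Type*} [CommSemiring R] [AddCommMonoid V] [Module R V]
  [AddCommMonoid W] [Module R W]

lemma LinearEquiv.map_curledMul (g : V ≃ₗ[R] W) (φ ψ : Module.Dual R W) (x y : V) :
    g (curledMul (φ ∘ₗ g) (ψ ∘ₗ g) x y) = curledMul φ ψ (g x) (g y) := by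
  simp [curledMul]

lemma curledMul_inj {φ ψ φ' ψ' : Module.Dual R (R × R)} :
    curledMul φ ψ = curledMul φ' ψ' ↔ φ = φ' ∧ ψ = ψ' := by
  refine ⟨fun h => ?_, fun h => h.1 ▸ h.2 ▸ rfl⟩
  have h12 := congrFun₂ h (1, 0) (0, 1)
  have h21 := congrFun₂ h (0, 1) (1, 0)
  simp only [curledMul, Prod.smul_mk, smul_eq_mul, mul_zero, mul_one, Prod.mk_add_mk, zero_add,
    add_zero, Prod.ext_iff] at h12 h21
  constructor <;> ext <;> simp [h12, h21]

lemma Module.Dual.eq_smul_fst_add_smul_snd (φ : Module.Dual R (R × R)) :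
    φ = φ (1, 0) • LinearMap.fst R R R + φ (0, 1) • LinearMap.snd R R R := by
  ext <;> simp

end

section

variable {F : Type*} [Field F]

lemma algIso_curledMul_iff {φ ψ φ' ψ' : Module.Dual F (F × F)} :
    AlgIso (curledMul φ ψ) (curledMul φ' ψ') ↔
      ∃ g : (F × F) ≃ₗ[F] F × F, φ' ∘ₗ g = φ ∧ ψ' ∘ₗ g = ψ := by
  constructor
  · rintro ⟨g, hg⟩
    refine ⟨g, curledMul_inj.mp (funext₂ fun x y => g.injective ?_)⟩
    rw [hg, g.map_curledMul]
  · rintro ⟨g, rfl, rfl⟩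
    exact ⟨g, g.map_curledMul φ' ψ'⟩

lemma smul_add_smul_eq_zero_iff_of_algIso {φ ψ φ' ψ' : Module.Dual F (F × F)}
    (h : AlgIso (curledMul φ ψ) (curledMul φ' ψ')) (a b : F) :
    a • φ + b • ψ = 0 ↔ a • φ' + b • ψ' = 0 := by
  obtain ⟨g, rfl, rfl⟩ := algIso_curledMul_iff.mp h
  rw [← LinearMap.smul_comp, ← LinearMap.smul_comp, ← LinearMap.add_comp]
  simp only [LinearMap.ext_iff, LinearMap.comp_apply, LinearMap.zero_apply]
  exact (g.surjective.forall (p := fun y => (a • φ' + b • ψ') y = 0)).symm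

variable {m : F × F → F × F → F × F}

lemma IsBilinearMul.zero_left (hm : IsBilinearMul m) (y : F × F) : m 0 y = 0 := by
  simpa using hm.1 (-1) 0 0 y

lemma IsBilinearMul.zero_right (hm : IsBilinearMul m) (x : F × F) : m x 0 = 0 := by
  simpa using hm.2 (-1) x 0 0

def IsBilinearMul.toLinearMap₂ (hm : IsBilinearMul m) : F × F →ₗ[F] F × F →ₗ[F] F × F :=
  LinearMap.mk₂ F m (fun x x' y => by simpa using hm.1 1 x x' y)
    (fun a x y => by simpa [hm.zero_left] using hm.1 a x 0 y)
    (fun x y y' => by simpa using hm.2 1 x y y')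
    (fun a x y => by simpa [hm.zero_right] using hm.2 a x y 0)

lemma IsBilinearMul.apply_eq (hm : IsBilinearMul m) (x y : F × F) :
    m x y = (x.1 * y.1) • m (1, 0) (1, 0) + (x.1 * y.2) • m (1, 0) (0, 1) +
      (x.2 * y.1) • m (0, 1) (1, 0) + (x.2 * y.2) • m (0, 1) (0, 1) := by
  have hbasis : ∀ z : F × F, z = z.1 • (1, 0) + z.2 • (0, 1) := fun z => by ext <;> simp
  change hm.toLinearMap₂ x y = _
  conv_lhs => rw [hbasis x, hbasis y]
  simp only [map_add, map_smul, LinearMap.add_apply, LinearMap.smul_apply]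
  simp only [IsBilinearMul.toLinearMap₂, LinearMap.mk₂_apply]
  module

lemma IsCurled.exists_eq_curledMul (hcard : ∃ c : F, c ≠ 0 ∧ c ≠ 1)
    (hm : IsBilinearMul m) (hcur : IsCurled m) :
    ∃ φ ψ : Module.Dual F (F × F), m = curledMul φ ψ := by
  obtain ⟨l₁, h₁⟩ := hcur (1, 0)
  obtain ⟨l₂, h₂⟩ := hcur (0, 1)
  set u := m (1, 0) (0, 1)
  set v := m (0, 1) (1, 0)
  -- The curl condition at `(1, t)` is affine in `t`, so two nonzero values of `t` fix `l₁, l₂`.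
  have hline : ∀ t : F, t ≠ 0 → u.2 + v.2 + t * l₂ = l₁ + t * (u.1 + v.1) := by
    intro t ht
    obtain ⟨l, hl⟩ := hcur (1, t)
    rw [hm.apply_eq, h₁, h₂] at hl
    obtain ⟨hl₁, hl₂⟩ := Prod.ext_iff.mp hl
    simp only [Prod.fst_add, Prod.snd_add, Prod.smul_fst, Prod.smul_snd, smul_eq_mul] at hl₁ hl₂
    apply mul_left_cancel₀ ht
    linear_combination hl₂ - t * hl₁
  obtain ⟨c, hc₀, hc₁⟩ := hcard
  have hl₂ : l₂ = u.1 + v.1 := mul_left_cancel₀ (sub_ne_zero_of_ne hc₁)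
    (by linear_combination hline c hc₀ - hline 1 one_ne_zero)
  have hl₁ : l₁ = u.2 + v.2 := by linear_combination hl₂ - hline 1 one_ne_zero
  -- Read off from `curledMul φ ψ (1, 0) (0, 1) = (ψ (0, 1), φ (1, 0))` and its mirror image.
  refine ⟨u.2 • LinearMap.fst F F F + v.1 • LinearMap.snd F F F,
    v.2 • LinearMap.fst F F F + u.1 • LinearMap.snd F F F, funext₂ fun x y => ?_⟩
  rw [hm.apply_eq, h₁, h₂, hl₁, hl₂]
  ext <;>
    simp only [curledMul, Prod.fst_add, Prod.snd_add, Prod.smul_fst, Prod.smul_snd, smul_eq_mul,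
      LinearMap.add_apply, LinearMap.smul_apply, LinearMap.fst_apply, LinearMap.snd_apply] <;>
    ring

lemma AlgIso.refl (m : F × F → F × F → F × F) : AlgIso m m :=
  ⟨LinearEquiv.refl F _, fun _ _ => rfl⟩

lemma AlgIso.trans {m₁ m₂ m₃ : F × F → F × F → F × F} (h₁₂ : AlgIso m₁ m₂)
    (h₂₃ : AlgIso m₂ m₃) : AlgIso m₁ m₃ := by
  obtain ⟨g, hg⟩ := h₁₂
  obtain ⟨g', hg'⟩ := h₂₃
  exact ⟨g.trans g', fun x y => by simp only [LinearEquiv.trans_apply, hg, hg']⟩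

lemma algIso_curledMul_fst_snd {φ ψ : Module.Dual F (F × F)}
    (h : Function.Injective (φ.prod ψ)) :
    AlgIso (curledMul φ ψ) (curledMul (LinearMap.fst F F F) (LinearMap.snd F F F)) :=
  algIso_curledMul_iff.mpr ⟨.ofInjectiveEndo _ h, LinearMap.fst_prod φ ψ, LinearMap.snd_prod φ ψ⟩

lemma Module.Dual.prod_injective {φ ψ : Module.Dual F (F × F)}
    (h : φ (1, 0) * ψ (0, 1) - φ (0, 1) * ψ (1, 0) ≠ 0) : Function.Injective (φ.prod ψ) := by
  refine (injective_iff_map_eq_zero _).mpr fun x hx => ?_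
  obtain ⟨hφx, hψx⟩ : φ x = 0 ∧ ψ x = 0 := by simpa [Prod.ext_iff] using hx
  rw [φ.eq_smul_fst_add_smul_snd] at hφx
  rw [ψ.eq_smul_fst_add_smul_snd] at hψx
  simp only [LinearMap.add_apply, LinearMap.smul_apply, LinearMap.fst_apply,
    LinearMap.snd_apply, smul_eq_mul] at hφx hψx
  ext
  · exact (mul_eq_zero.mp (by linear_combination ψ (0, 1) * hφx - φ (0, 1) * hψx)).resolve_left h
  · exact (mul_eq_zero.mp (by linear_combination φ (1, 0) * hψx - ψ (1, 0) * hφx)).resolve_left h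

lemma Module.Dual.exists_fst_comp_eq {φ : Module.Dual F (F × F)} (hφ : φ ≠ 0) :
    ∃ g : (F × F) ≃ₗ[F] F × F, LinearMap.fst F F F ∘ₗ g = φ := by
  by_cases h₁ : φ (1, 0) = 0
  · have h₂ : φ (0, 1) ≠ 0 := fun h₂ => hφ (by ext <;> simp [h₁, h₂])
    exact ⟨.ofInjectiveEndo _ (Module.Dual.prod_injective (ψ := LinearMap.fst F F F)
      (by simpa [h₁] using h₂)), LinearMap.fst_prod _ _⟩
  · exact ⟨.ofInjectiveEndo _ (Module.Dual.prod_injective (ψ := LinearMap.snd F F F)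
      (by simpa using h₁)), LinearMap.fst_prod _ _⟩

def curledForms : F ⊕ Bool → Module.Dual F (F × F) × Module.Dual F (F × F)
  | .inr true => (LinearMap.fst F F F, LinearMap.snd F F F)
  | .inl a => (LinearMap.fst F F F, (1 + a) • LinearMap.fst F F F)
  | .inr false => (0, LinearMap.fst F F F)

def curledRel : F ⊕ Bool → F → F → Prop
  | .inr true, a, b => a = 0 ∧ b = 0
  | .inl c, a, b => a + b * (1 + c) = 0
  | .inr false, _, b => b = 0

lemma curledFamily2_eq_curledMul (h2 : (2 : F) = 0) (i : F ⊕ Bool) :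
    curledFamily2 i = curledMul (curledForms i).1 (curledForms i).2 := by
  funext x y
  rcases i with a | _ | _ <;> ext <;>
    simp only [curledFamily2, curledForms, curledMul, scMul, Prod.fst_add, Prod.snd_add,
      Prod.smul_fst, Prod.smul_snd, smul_eq_mul, LinearMap.fst_apply, LinearMap.snd_apply,
      LinearMap.smul_apply, LinearMap.zero_apply]
  case inl.fst => linear_combination -(x.1 * y.1) * h2
  all_goals ring

lemma smul_add_smul_curledForms_eq_zero_iff (i : F ⊕ Bool) (a b : F) :
    a • (curledForms i).1 + b • (curledForms i).2 = 0 ↔ curledRel i a b := by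
  rcases i with c | _ | _ <;>
    simp [curledForms, curledRel, LinearMap.prod_ext_iff, LinearMap.ext_ring_iff]

lemma curledRel_injective : Function.Injective (curledRel (F := F)) := by
  intro i j h
  have key (a b : F) : curledRel i a b ↔ curledRel j a b := by rw [h]
  rcases i with c | _ | _ <;> rcases j with d | _ | _
  · have := (key (-(1 + c)) 1).mp (by simp [curledRel])
    simp only [curledRel, one_mul] at this
    exact congrArg Sum.inl (by linear_combination -this)
  · simpa [curledRel] using (key (-(1 + c)) 1).mp (by simp [curledRel])
  · simpa [curledRel] using (key (-(1 + c)) 1).mp (by simp [curledRel])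
  · simpa [curledRel] using (key (-(1 + d)) 1).mpr (by simp [curledRel])
  · rfl
  · simpa [curledRel] using (key 1 0).mp (by simp [curledRel])
  · simpa [curledRel] using (key (-(1 + d)) 1).mpr (by simp [curledRel])
  · simpa [curledRel] using (key 1 0).mpr (by simp [curledRel])
  · rfl

lemma exists_algIso_curledForms {φ ψ : Module.Dual F (F × F)} (hne : ¬(φ = 0 ∧ ψ = 0)) :
    ∃ i, AlgIso (curledMul φ ψ) (curledMul (curledForms i).1 (curledForms i).2) := by
  by_cases hφ : φ = 0
  · subst hφ
    obtain ⟨g, hg⟩ := Module.Dual.exists_fst_comp_eq fun hψ => hne ⟨rfl, hψ⟩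
    exact ⟨.inr false, algIso_curledMul_iff.mpr ⟨g, LinearMap.zero_comp _, hg⟩⟩
  -- With `φ` moved to `fst`, write `ψ ∘ g⁻¹ = a • fst + b • snd`: the pair is `(fst, a • fst)`
  -- if `b = 0` and is invertible otherwise.
  obtain ⟨g, rfl⟩ := Module.Dual.exists_fst_comp_eq hφ
  set ψ' : Module.Dual F (F × F) := ψ ∘ₗ g.symm.toLinearMap
  have hψ : ψ' ∘ₗ g = ψ := LinearMap.ext fun x => by simp [ψ']
  by_cases hb : ψ' (0, 1) = 0
  · refine ⟨.inl (ψ' (1, 0) - 1), algIso_curledMul_iff.mpr ⟨g, rfl, ?_⟩⟩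
    rw [← hψ, ψ'.eq_smul_fst_add_smul_snd, hb]
    simp [curledForms]
  · have hinj : Function.Injective ((LinearMap.fst F F F).prod ψ') :=
      Module.Dual.prod_injective (by simpa using hb)
    exact ⟨.inr true, (algIso_curledMul_iff.mpr ⟨g, rfl, hψ⟩).trans
      (algIso_curledMul_fst_snd hinj)⟩

lemma eq_of_algIso_curledForms {φ ψ : Module.Dual F (F × F)} {i j : F ⊕ Bool}
    (hi : AlgIso (curledMul φ ψ) (curledMul (curledForms i).1 (curledForms i).2))
    (hj : AlgIso (curledMul φ ψ) (curledMul (curledForms j).1 (curledForms j).2)) : i = j := by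
  refine curledRel_injective (funext₂ fun a b => propext ?_)
  rw [← smul_add_smul_curledForms_eq_zero_iff, ← smul_add_smul_eq_zero_iff_of_algIso hi,
    smul_add_smul_eq_zero_iff_of_algIso hj, smul_add_smul_curledForms_eq_zero_iff]

end

/-- over a field of characteristic 2 with more than two elements,
any nonzero bilinear curled multiplication on `F × F` is isomorphic to exactly
one member of `curledFamily2`, and the members of `curledFamily2` are pairwise
non-isomorphic. -/
theorem stmt_15 {F : Type*} [Field F] (h2 : ringChar F = 2)
    (hcard : ∃ c : F, c ≠ 0 ∧ c ≠ 1)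
    (m : F × F → F × F → F × F) (hbil : IsBilinearMul m)
    (hnz : ¬ ∀ x y, m x y = 0) (hcur : IsCurled m) :
    (∃! i : F ⊕ Bool, AlgIso m (curledFamily2 i)) ∧
      ∀ i j : F ⊕ Bool, i ≠ j → ¬ AlgIso (curledFamily2 i) (curledFamily2 j) := by
  have : CharP F 2 := ringChar.of_eq h2
  simp only [curledFamily2_eq_curledMul CharTwo.two_eq_zero]
  obtain ⟨φ, ψ, rfl⟩ := hcur.exists_eq_curledMul hcard hbil
  have hne : ¬(φ = 0 ∧ ψ = 0) := by
    rintro ⟨rfl, rfl⟩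
    exact hnz fun x y => by simp [curledMul]
  obtain ⟨i, hi⟩ := exists_algIso_curledForms hne
  exact ⟨⟨i, hi, fun j hj => eq_of_algIso_curledForms hj hi⟩,
    fun i j hij hiso => hij (eq_of_algIso_curledForms (AlgIso.refl _) hiso)⟩
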